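/- arXiv:2205.02532 — 2 statements merged into one kernel-verified Lean document; each statement's English description precedes it below -/
import Mathlib

section
/- Let 𝒢 be a Grothendieck category and let 𝒞 ⊆ 𝒢 be a Giraud subcategory, i.e., a reflective full subcategory whose inclusion S: 𝒞 → 𝒢 admits an exact left adjoint Q: 𝒢 → 𝒞. If N ∈ 𝒢 is a Noetherian object, then Q(N) is a Noetherian object of 𝒞. -/
/-!
Pulling back along the unit `η_N : N ⟶ S (Q N)` the image under `S` of a subobject of `Q N`
gives a monotone map `Subobject (Q N) → Subobject N`. Applying the left exact functor `Q`
recovers the original subobject, because `Q η_N` is invertible and so is the counit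
`Q S ⟶ 𝟭` (`S` is fully faithful). Hence the map is injective, so strictly monotone, and a
strictly ascending chain of subobjects of `Q N` would give one of `N`.
-/

open CategoryTheory Limits

universe v u u'

namespace CategoryTheory

lemma isNoetherianObject_of_strictMono {C D : Type*} [Category C] [Category D] {X : C} {Y : D}
    {g : Subobject X → Subobject Y} (hg : StrictMono g) [IsNoetherianObject Y] :
    IsNoetherianObject X :=
  (isNoetherianObject_iff_not_strictMono X).2 fun f hf =>
    not_strictMono_of_isNoetherianObject (g ∘ f) (hg.comp hf)

namespace Functor

variable {C D : Type*} [Category C] [Category D] (F : C ⥤ D) [F.PreservesMonomorphisms]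

noncomputable def mapSubobject {X : C} (P : Subobject X) : Subobject (F.obj X) :=
  Subobject.mk (F.map P.arrow)

lemma mapSubobject_mk {A X : C} (i : A ⟶ X) [Mono i] :
    F.mapSubobject (Subobject.mk i) = Subobject.mk (F.map i) :=
  Subobject.mk_eq_mk_of_comm _ _ (F.mapIso (Subobject.underlyingIso i)) <| by
    rw [mapIso_hom, ← F.map_comp, Subobject.underlyingIso_hom_comp_eq_mk]

lemma monotone_mapSubobject (X : C) : Monotone (F.mapSubobject (X := X)) := fun P R hPR =>
  Subobject.mk_le_mk_of_comm (F.map (Subobject.ofLE P R hPR)) <| by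
    rw [← F.map_comp, Subobject.ofLE_arrow]

end Functor

lemma Adjunction.mapSubobject_pullback_unit_mapSubobject {C D : Type*} [Category C] [Category D]
    [HasPullbacks C] {Q : C ⥤ D} {S : D ⥤ C} (adj : Q ⊣ S) [S.Full] [S.Faithful]
    [PreservesLimitsOfShape WalkingCospan Q] [S.PreservesMonomorphisms]
    (X : C) (P : Subobject (Q.obj X)) :
    Q.mapSubobject ((Subobject.pullback (adj.unit.app X)).obj (S.mapSubobject P)) = P := by
  induction P using Subobject.ind with | _ i
  have sq := IsPullback.of_hasPullback (S.map i) (adj.unit.app X)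
  rw [S.mapSubobject_mk, Subobject.pullback_obj_mk sq, Q.mapSubobject_mk]
  -- `Q.map (adj.unit.app X)` is invertible, hence so is its base change `Q.map (pullback.fst _ _)`.
  have := (sq.map Q).isIso_fst_of_isIso
  refine Subobject.mk_eq_mk_of_comm _ _
    (asIso (Q.map (pullback.fst _ _)) ≪≫ asIso (adj.counit.app _)) ?_
  calc (Q.map (pullback.fst _ _) ≫ adj.counit.app _) ≫ i
      = Q.map (pullback.fst _ _ ≫ S.map i) ≫ adj.counit.app _ := by
        rw [Q.map_comp_assoc, Category.assoc, adj.counit_naturality i]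
    _ = Q.map (pullback.snd _ _) := by
        rw [pullback.condition, Q.map_comp_assoc, adj.left_triangle_components, Category.comp_id]

end CategoryTheory

theorem giraud_noetherianObject_general
    {C : Type u} [Category.{v} C] [Abelian C]
    {D : Type u'} [Category.{v} D]
    (S : D ⥤ C) [S.Full] [S.Faithful]
    (Q : C ⥤ D) (adj : Q ⊣ S) [PreservesFiniteLimits Q]
    (N : C) [IsNoetherianObject N] :
    IsNoetherianObject (Q.obj N) := by
  have := S.preservesMonomorphisms_of_adjunction adj
  refine isNoetherianObject_of_strictMono (Y := N) (Monotone.strictMono_of_injective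
    ((Subobject.pullback (adj.unit.app N)).monotone.comp (S.monotone_mapSubobject _)) ?_)
  exact Function.LeftInverse.injective (adj.mapSubobject_pullback_unit_mapSubobject N)

/-- Let `𝒢` be a Grothendieck category (an abelian category with colimits satisfying
AB5 and having a separator) and let `𝒞 ⊆ 𝒢` be a Giraud subcategory: a reflective full
subcategory whose (fully faithful) inclusion `S : 𝒞 ⥤ 𝒢` admits an exact left adjoint
`Q : 𝒢 ⥤ 𝒞` (exactness of the left adjoint `Q` amounts to preservation of finite
limits).  If `N` is a Noetherian object of `𝒢` (its lattice of subobjects has the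
ascending chain condition), then `Q(N)` is a Noetherian object of `𝒞`. -/
theorem giraud_noetherianObject
    {C : Type u} [Category.{v} C] [Abelian C] [HasColimits C] [AB5 C] [HasSeparator C]
    {D : Type u'} [Category.{v} D]
    (S : D ⥤ C) [S.Full] [S.Faithful]
    (Q : C ⥤ D) (adj : Q ⊣ S) [PreservesFiniteLimits Q]
    (N : C) [IsNoetherianObject N] :
    IsNoetherianObject (Q.obj N) :=
  giraud_noetherianObject_general S Q adj N
end

section
/- Let 𝒢 be a Grothendieck category with Gabriel filtration 0 = 𝒢_{-1} ⊆ 𝒢_0 ⊆ … ⊆ 𝒢_α ⊆ …, and let 𝒢̃ = ⋃_α 𝒢_α. Then every Noetherian object N of 𝒢 belongs to 𝒢̃, i.e., there exists an ordinal α with N ∈ 𝒢_α. -/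
/-! ## Torsion theories in Grothendieck categories -/

open CategoryTheory Limits

universe v u

/-- A torsion theory `τ = (𝒯, ℱ)` in an abelian category with coproducts: the torsion
class `𝒯` is closed under quotients, extensions and coproducts, every morphism from a
torsion object to a torsion-free object vanishes, and every object `X` is an extension
`0 → T_X → X → F_X → 0` of a torsion-free object by a torsion object. -/
structure TorsionTheory (C : Type u) [Category.{v} C] [Abelian C] [HasColimits C] where
  /-- The torsion class `𝒯`. -/
  torsion : C → Prop
  /-- The torsion-free class `ℱ`. -/
  free : C → Prop
  /-- `𝒯` is closed under quotient objects. -/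
  torsion_quot : ∀ ⦃X Y : C⦄ (f : X ⟶ Y), Epi f → torsion X → torsion Y
  /-- `𝒯` is closed under extensions. -/
  torsion_ext : ∀ ⦃X Y : C⦄ (f : X ⟶ Y), Mono f → torsion X → torsion (cokernel f) →
    torsion Y
  /-- `𝒯` is closed under coproducts. -/
  torsion_coprod : ∀ ⦃ι : Type v⦄ (F : ι → C), (∀ i, torsion (F i)) → torsion (∐ F)
  /-- Every morphism from a torsion object to a torsion-free object is zero. -/
  hom_zero : ∀ ⦃T F : C⦄, torsion T → free F → ∀ f : T ⟶ F, f = 0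
  /-- Every object is an extension of a torsion-free object by a torsion object. -/
  exists_seq : ∀ X : C, ∃ (T : C) (f : T ⟶ X), Mono f ∧ torsion T ∧ free (cokernel f)

/-- A torsion theory is hereditary if its torsion class is closed under subobjects. -/
def TorsionTheory.IsHereditary {C : Type u} [Category.{v} C] [Abelian C] [HasColimits C]
    (τ : TorsionTheory C) : Prop :=
  ∀ ⦃X Y : C⦄ (f : X ⟶ Y), Mono f → τ.torsion Y → τ.torsion X

/-- A hereditary torsion class: the torsion class of a hereditary torsion theory. -/
def IsHereditaryTorsionClass {C : Type u} [Category.{v} C] [Abelian C] [HasColimits C]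
    (T : C → Prop) : Prop :=
  ∃ τ : TorsionTheory C, τ.IsHereditary ∧ τ.torsion = T

/-- The smallest hereditary torsion class containing a given class `S` of objects:
the intersection of all hereditary torsion classes containing `S`. -/
def htcGen {C : Type u} [Category.{v} C] [Abelian C] [HasColimits C]
    (S : C → Prop) : C → Prop :=
  fun X => ∀ T : C → Prop, IsHereditaryTorsionClass T → (∀ Y, S Y → T Y) → T X

/-- An object `X` is cocritical with respect to a class `T` if `X` has no nonzero
subobject lying in `T` (it is `T`-torsion free) while every proper quotient of `X`
lies in `T`. -/
def Cocritical {C : Type u} [Category.{v} C] [Abelian C] [HasColimits C]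
    (T : C → Prop) (X : C) : Prop :=
  (∀ Y : Subobject X, T ((Y : C)) → Y = ⊥) ∧
  (∀ Y : Subobject X, Y ≠ ⊥ → T (cokernel Y.arrow))

/-- One step of the Gabriel filtration: the smallest hereditary torsion class
containing a class `T` together with all the `T`-cocritical objects. -/
def gabrielStep {C : Type u} [Category.{v} C] [Abelian C] [HasColimits C]
    (T : C → Prop) : C → Prop :=
  htcGen (fun X => T X ∨ Cocritical T X)

/-- The Gabriel filtration `0 = 𝒢₋₁ ⊆ 𝒢₀ ⊆ … ⊆ 𝒢_α ⊆ …` of a Grothendieck category,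
here re-indexed so that `gabrielFiltration C 0 = 𝒢₋₁` is the class of zero objects:
at successor steps one adds all cocritical objects and closes up to the generated
hereditary torsion class, and at limit steps one takes the hereditary torsion class
generated by the union of the previous stages. -/
noncomputable def gabrielFiltration (C : Type u) [Category.{v} C] [Abelian C]
    [HasColimits C] : Ordinal.{v} → (C → Prop) :=
  fun o => Ordinal.limitRecOn (motive := fun _ => C → Prop) o
    (fun X => IsZero X)
    (fun _ T => gabrielStep T)
    (fun o _ ih => htcGen (fun X => ∃ (β : Ordinal.{v}) (h : β < o), ih β h X))

/-! Every quotient `N/Y` of a Noetherian object lies in the filtration, by Noetherian induction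
on `Y`: the proper quotients of `N/Y` are quotients `N/Y'` with `Y < Y'`, and since there is only
a set of them they all lie in one stage `𝒢_α`. Then `N/Y` lies in `𝒢_{α+1}`: either it has a
nonzero subobject in `𝒢_α`, and is an extension of two objects of `𝒢_α`, or it is
`α`-cocritical. -/

variable {C : Type u} [Category.{v} C] [Abelian C] [HasColimits C]

namespace IsHereditaryTorsionClass

variable {T : C → Prop}

lemma of_iso (hT : IsHereditaryTorsionClass T) {X Y : C} (e : X ≅ Y) (hX : T X) : T Y := by
  obtain ⟨τ, -, rfl⟩ := hT
  exact τ.torsion_quot e.hom inferInstance hX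

lemma of_subobject_of_cokernel (hT : IsHereditaryTorsionClass T) {X : C} (Z : Subobject X)
    (hZ : T Z) (hQ : T (cokernel Z.arrow)) : T X := by
  obtain ⟨τ, -, rfl⟩ := hT
  exact τ.torsion_ext Z.arrow inferInstance hZ hQ

end IsHereditaryTorsionClass

lemma htcGen_of_mem {S : C → Prop} {X : C} (h : S X) : htcGen S X :=
  fun _ _ hST => hST X h

lemma htcGen_of_iso {S : C → Prop} {X Y : C} (e : X ≅ Y) (h : htcGen S X) : htcGen S Y :=
  fun T hT hST => hT.of_iso e (h T hT hST)

lemma htcGen_of_subobject_of_cokernel {S : C → Prop} {X : C} (Z : Subobject X)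
    (hZ : htcGen S Z) (hQ : htcGen S (cokernel Z.arrow)) : htcGen S X :=
  fun T hT hST => hT.of_subobject_of_cokernel Z (hZ T hT hST) (hQ T hT hST)

lemma gabrielStep_of_forall_cokernel {T : C → Prop} {X : C}
    (h : ∀ Z : Subobject X, Z ≠ ⊥ → T (cokernel Z.arrow)) : gabrielStep T X := by
  by_cases hZ : ∃ Z : Subobject X, Z ≠ ⊥ ∧ T Z
  · obtain ⟨Z, hZ, hTZ⟩ := hZ
    exact htcGen_of_subobject_of_cokernel Z (htcGen_of_mem (Or.inl hTZ))
      (htcGen_of_mem (Or.inl (h Z hZ)))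
  · exact htcGen_of_mem (Or.inr ⟨fun Z hTZ => by_contra fun hne => hZ ⟨Z, hne, hTZ⟩, h⟩)

lemma gabrielFiltration_zero : gabrielFiltration C 0 = IsZero :=
  Ordinal.limitRecOn_zero (motive := fun _ => C → Prop) _ _ _

lemma gabrielFiltration_succ (α : Ordinal.{v}) :
    gabrielFiltration C (Order.succ α) = gabrielStep (gabrielFiltration C α) :=
  Ordinal.limitRecOn_add_one (motive := fun _ => C → Prop) _ _ _ _

lemma gabrielFiltration_limit {α : Ordinal.{v}} (h : Order.IsSuccLimit α) :
    gabrielFiltration C α = htcGen fun X => ∃ β < α, gabrielFiltration C β X := by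
  rw [gabrielFiltration, Ordinal.limitRecOn_limit _ _ _ _ h]
  simp only [exists_prop]
  rfl

lemma gabrielFiltration_of_iso (α : Ordinal.{v}) {X Y : C} (e : X ≅ Y)
    (h : gabrielFiltration C α X) : gabrielFiltration C α Y := by
  rcases Ordinal.zero_or_succ_or_isSuccLimit α with rfl | ⟨β, rfl⟩ | hα
  · rw [gabrielFiltration_zero] at h ⊢
    exact h.of_iso e.symm
  · rw [gabrielFiltration_succ] at h ⊢
    exact htcGen_of_iso e h
  · rw [gabrielFiltration_limit hα] at h ⊢
    exact htcGen_of_iso e h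

lemma gabrielFiltration_mono {α β : Ordinal.{v}} (hαβ : α ≤ β) {X : C}
    (hX : gabrielFiltration C α X) : gabrielFiltration C β X := by
  induction β using WellFoundedLT.induction with
  | _ β IH =>
  rcases hαβ.eq_or_lt with rfl | hlt
  · exact hX
  rcases Ordinal.zero_or_succ_or_isSuccLimit β with rfl | ⟨γ, rfl⟩ | hβ
  · exact (not_lt_zero hlt).elim
  · rw [gabrielFiltration_succ]
    exact htcGen_of_mem (Or.inl (IH γ (Order.lt_succ γ) (Order.lt_succ_iff.mp hlt)))
  · rw [gabrielFiltration_limit hβ]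
    exact htcGen_of_mem ⟨α, hlt, hX⟩

lemma exists_forall_gabrielFiltration {ι : Type*} [Small.{v} ι] (X : ι → C)
    (h : ∀ i, ∃ α, gabrielFiltration C α (X i)) :
    ∃ α, ∀ i, gabrielFiltration C α (X i) := by
  choose α hα using h
  exact ⟨⨆ i, α i, fun i => gabrielFiltration_mono (Ordinal.le_iSup α i) (hα i)⟩

lemma CategoryTheory.Subobject.exists_gt_cokernel_iso {N : C} (Y : Subobject N)
    (Z : Subobject (cokernel Y.arrow)) (hZ : Z ≠ ⊥) :
    ∃ Y' : Subobject N, Y < Y' ∧ Nonempty (cokernel Y'.arrow ≅ cokernel Z.arrow) := by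
  set π := cokernel.π Y.arrow
  set q := π ≫ cokernel.π Z.arrow
  have hY : Y ≤ kernelSubobject q :=
    le_kernelSubobject _ _ (by simp [q, π])
  refine ⟨kernelSubobject q, lt_of_le_of_ne hY fun hYq => hZ ?_, ?_⟩
  · -- `Z` pulled back along the epimorphism `π` lies in `ker q = Y`, hence is killed by `π`
    have hfac : (kernelSubobject q).Factors (pullback.snd Z.arrow π) :=
      kernelSubobject_factors _ _ (by simp [q, ← pullback.condition_assoc])
    rw [← hYq] at hfac
    have hsnd : pullback.snd Z.arrow π ≫ π = 0 := by
      rw [← Subobject.factorThru_arrow _ _ hfac, Category.assoc, cokernel.condition, comp_zero]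
    rw [← Subobject.mk_arrow Z, Subobject.mk_eq_bot_iff_zero]
    exact zero_of_epi_comp (pullback.fst Z.arrow π) (by rw [pullback.condition, hsnd])
  · have : Epi q := epi_comp _ _
    exact ⟨cokernel.mapIso _ _ (kernelSubobjectIso q) (Iso.refl N) (by simp) ≪≫
      (colimit.isColimit _).coconePointUniqueUpToIso
        (Abelian.epiIsCokernelOfKernel _ (kernelIsKernel q))⟩

lemma exists_gabrielFiltration_cokernel [WellPowered.{v} C] {N : C} [IsNoetherianObject N]
    (Y : Subobject N) : ∃ α, gabrielFiltration C α (cokernel Y.arrow) := by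
  induction Y using WellFoundedGT.induction with
  | _ Y IH =>
  have hquot (Z : {Z : Subobject (cokernel Y.arrow) // Z ≠ ⊥}) :
      ∃ β, gabrielFiltration C β (cokernel Z.1.arrow) := by
    obtain ⟨Y', hYY', ⟨e⟩⟩ := Y.exists_gt_cokernel_iso Z.1 Z.2
    obtain ⟨β, hβ⟩ := IH Y' hYY'
    exact ⟨β, gabrielFiltration_of_iso β e hβ⟩
  obtain ⟨α, hα⟩ := exists_forall_gabrielFiltration _ hquot
  refine ⟨Order.succ α, ?_⟩
  rw [gabrielFiltration_succ]
  exact gabrielStep_of_forall_cokernel fun Z hZ => hα ⟨Z, hZ⟩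

theorem noetherianObject_mem_gabrielFiltration_general
    {C : Type u} [Category.{v} C] [Abelian C] [HasColimits C] [HasSeparator C]
    (N : C) [IsNoetherianObject N] :
    ∃ α : Ordinal.{v}, gabrielFiltration C α N := by
  obtain ⟨α, hα⟩ := exists_gabrielFiltration_cokernel (⊥ : Subobject N)
  exact ⟨α, gabrielFiltration_of_iso α
    (cokernelIsoOfEq Subobject.bot_arrow ≪≫ cokernelZeroIsoTarget) hα⟩

/-- Let `𝒢` be a Grothendieck category with Gabriel filtration
`0 = 𝒢₋₁ ⊆ 𝒢₀ ⊆ … ⊆ 𝒢_α ⊆ …` and let `𝒢̃ = ⋃_α 𝒢_α`.  Then every Noetherian object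
`N` of `𝒢` belongs to `𝒢̃`, i.e. there is an ordinal `α` with `N ∈ 𝒢_α`. -/
theorem noetherianObject_mem_gabrielFiltration
    {C : Type u} [Category.{v} C] [Abelian C] [HasColimits C] [AB5 C] [HasSeparator C]
    (N : C) [IsNoetherianObject N] :
    ∃ α : Ordinal.{v}, gabrielFiltration C α N :=
  noetherianObject_mem_gabrielFiltration_general N
end
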